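/- arXiv:2406.11137 — 3 statements merged into one kernel-verified Lean document; each statement's English description precedes it below -/
import Mathlib

section
/- Let α > 1. There exist constants c₁, c₂ > 0 such that every holomorphic function f on D with sup_{z∈D} |f'(z)|(1-|z|²)^α < ∞ satisfies c₁ (|f(0)| + sup_{z∈D} |f'(z)|(1-|z|²)^α) ≤ sup_{z∈D} |f(z)|(1-|z|²)^{α-1} ≤ c₂ (|f(0)| + sup_{z∈D} |f'(z)|(1-|z|²)^α). -/
/-!
Upper bound: integrating `|f'(w)| ≤ M (1 - |w|)^{-α}` along the radius gives
`|f(z) - f(0)| ≤ M (1 - |z|)^{1-α} / (α - 1)`, and `(1 - |z|)^{1-α} (1 - |z|²)^{α-1} = (1 + |z|)^{α-1} ≤ 2^{α-1}`.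
Lower bound: Cauchy's estimate for `f'(z)` on the disc of radius `(1 - |z|)/2` about `z`, on which
`1 - |w|²` is comparable to `1 - |z|²`; and `|f(0)|` is the weighted value at `0`.
-/

open MeasureTheory Complex Real Filter ENNReal NNReal

noncomputable section

def UD : Set ℂ := Metric.ball 0 1

/-- Carleson tent over the subarc of the unit circle of normalized length `h`
centered at `e^{iθ}`. -/
def tent (θ h : ℝ) : Set ℂ :=
  {z : ℂ | ‖z‖ < 1 ∧ 1 - h < ‖z‖ ∧
    ∃ φ : ℝ, |φ - θ| ≤ Real.pi * h ∧ z = (‖z‖ : ℂ) * Complex.exp (φ * Complex.I)}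

/-- Disc automorphism `φ_a`. -/
def moeb (a z : ℂ) : ℂ := (a - z) / (1 - (starRingEnd ℂ) a * z)

/-- `Q_t` norm (as an extended real number). -/
def qNorm (t : ℝ) (f : ℂ → ℂ) : ℝ≥0∞ :=
  ENNReal.ofReal (‖f 0‖) +
    (⨆ a ∈ UD, ∫⁻ z in UD, ENNReal.ofReal
      (‖deriv f z‖ ^ 2 * (1 - ‖moeb a z‖ ^ 2) ^ t)) ^ (1/2 : ℝ)

/-- `F(p, q, s)` norm (as an extended real number). -/
def fNorm (p q s : ℝ) (f : ℂ → ℂ) : ℝ≥0∞ :=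
  ENNReal.ofReal (‖f 0‖) +
    (⨆ a ∈ UD, ∫⁻ z in UD, ENNReal.ofReal
      (‖deriv f z‖ ^ p * (1 - ‖z‖ ^ 2) ^ q *
        (1 - ‖moeb a z‖ ^ 2) ^ s)) ^ (1/p)

lemma mem_UD_iff {z : ℂ} : z ∈ UD ↔ ‖z‖ < 1 := by
  simp [UD]

lemma zero_mem_UD : (0 : ℂ) ∈ UD := Metric.mem_ball_self one_pos

lemma one_sub_norm_sq_pos {z : ℂ} (hz : z ∈ UD) : 0 < 1 - ‖z‖ ^ 2 := by
  have := mem_UD_iff.mp hz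
  nlinarith [norm_nonneg z]

lemma ofReal_mul_mem_UD {t : ℝ} (ht : t ∈ Set.Icc (0 : ℝ) 1) {z : ℂ} (hz : z ∈ UD) :
    (t * z : ℂ) ∈ UD := by
  rw [mem_UD_iff, norm_mul, Complex.norm_of_nonneg ht.1]
  nlinarith [mem_UD_iff.mp hz, ht.2, norm_nonneg z]

lemma hasDerivAt_radialBound {α M r t : ℝ} (hα : α ≠ 1) (ht : 0 < 1 - t * r) :
    HasDerivAt (fun s : ℝ => M / (α - 1) * ((1 - s * r) ^ (1 - α) - 1))
      (M * r * (1 - t * r) ^ (-α)) t := by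
  have hlin : HasDerivAt (fun s : ℝ => 1 - s * r) (-r) t := by
    simpa using ((hasDerivAt_id t).mul_const r).const_sub 1
  refine (((hlin.rpow_const (p := 1 - α) (Or.inl ht.ne')).sub_const 1).const_mul
    (M / (α - 1))).congr_deriv ?_
  rw [show 1 - α - 1 = -α by ring]
  field_simp [sub_ne_zero.mpr hα]
  ring

lemma norm_sub_le_of_norm_deriv_mul_le {α : ℝ} (hα : α ≠ 1) {f : ℂ → ℂ}
    (hf : DifferentiableOn ℂ f UD) {M : ℝ}
    (hM : ∀ w ∈ UD, ‖deriv f w‖ * (1 - ‖w‖) ^ α ≤ M) {z : ℂ} (hz : z ∈ UD) :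
    ‖f z - f 0‖ ≤ M / (α - 1) * ((1 - ‖z‖) ^ (1 - α) - 1) := by
  set r := ‖z‖
  have hbase : ∀ t ∈ Set.Icc (0 : ℝ) 1, 0 < 1 - t * r := fun t ht => by
    nlinarith [mem_UD_iff.mp hz, norm_nonneg z, ht.1, ht.2]
  have hg : ∀ t ∈ Set.Icc (0 : ℝ) 1,
      HasDerivAt (fun s : ℝ => f (s * z) - f 0) (deriv f (t * z) * z) t := fun t ht => by
    have hft : HasDerivAt f (deriv f (t * z)) (t * z) :=
      (hf.differentiableAt (Metric.isOpen_ball.mem_nhds (ofReal_mul_mem_UD ht hz))).hasDerivAt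
    exact ((hft.comp (t : ℂ) (hasDerivAt_mul_const z)).comp_ofReal).sub_const (f 0)
  have hB : ∀ t ∈ Set.Icc (0 : ℝ) 1, HasDerivAt
      (fun s : ℝ => M / (α - 1) * ((1 - s * r) ^ (1 - α) - 1)) (M * r * (1 - t * r) ^ (-α)) t :=
    fun t ht => hasDerivAt_radialBound hα (hbase t ht)
  have hbound : ∀ t ∈ Set.Ico (0 : ℝ) 1,
      ‖deriv f (t * z) * z‖ ≤ M * r * (1 - t * r) ^ (-α) := fun t ht => by
    have ht' := Set.Ico_subset_Icc_self ht
    have hw := hM _ (ofReal_mul_mem_UD ht' hz)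
    rw [norm_mul, Complex.norm_of_nonneg ht.1] at hw
    rw [norm_mul, Real.rpow_neg (hbase t ht').le, mul_right_comm, ← div_eq_mul_inv]
    exact mul_le_mul_of_nonneg_right
      ((le_div_iff₀ (Real.rpow_pos_of_pos (hbase t ht') α)).mpr hw) (norm_nonneg z)
  simpa using image_norm_le_of_norm_deriv_right_le_deriv_boundary'
    (fun t ht => (hg t ht).continuousAt.continuousWithinAt)
    (fun t ht => (hg t (Set.Ico_subset_Icc_self ht)).hasDerivWithinAt) (by simp)
    (fun t ht => (hB t ht).continuousAt.continuousWithinAt)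
    (fun t ht => (hB t (Set.Ico_subset_Icc_self ht)).hasDerivWithinAt) hbound
    (Set.right_mem_Icc.mpr zero_le_one)

lemma one_sub_rpow_neg_mul_one_sub_sq_rpow_le {r β : ℝ} (hr0 : 0 ≤ r) (hr1 : r < 1) (hβ : 0 ≤ β) :
    (1 - r) ^ (-β) * (1 - r ^ 2) ^ β ≤ 2 ^ β := by
  have h1r : 0 < 1 - r := by linarith
  rw [show 1 - r ^ 2 = (1 - r) * (1 + r) by ring, Real.mul_rpow h1r.le (by linarith),
    ← mul_assoc, ← Real.rpow_add h1r, neg_add_cancel, Real.rpow_zero, one_mul]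
  exact Real.rpow_le_rpow (by linarith) (by linarith) hβ

lemma norm_mul_weight_le_of_deriv {α : ℝ} (hα : 1 < α) {f : ℂ → ℂ}
    (hf : DifferentiableOn ℂ f UD) {M : ℝ}
    (hM : ∀ w ∈ UD, ‖deriv f w‖ * (1 - ‖w‖ ^ 2) ^ α ≤ M) {z : ℂ} (hz : z ∈ UD) :
    ‖f z‖ * (1 - ‖z‖ ^ 2) ^ (α - 1) ≤ ‖f 0‖ + 2 ^ (α - 1) / (α - 1) * M := by
  have hz1 := mem_UD_iff.mp hz
  have hM0 : 0 ≤ M := (norm_nonneg _).trans (by simpa using hM 0 zero_mem_UD)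
  have hM' : ∀ w ∈ UD, ‖deriv f w‖ * (1 - ‖w‖) ^ α ≤ M := fun w hw => by
    refine le_trans (mul_le_mul_of_nonneg_left ?_ (norm_nonneg _)) (hM w hw)
    have := mem_UD_iff.mp hw
    exact Real.rpow_le_rpow (by linarith) (by nlinarith [norm_nonneg w]) (by linarith)
  have hgrowth : ‖f z‖ ≤ ‖f 0‖ + M / (α - 1) * (1 - ‖z‖) ^ (-(α - 1)) := by
    have h := norm_sub_le_of_norm_deriv_mul_le hα.ne' hf hM' hz
    rw [neg_sub]
    have : 0 ≤ M / (α - 1) := div_nonneg hM0 (by linarith)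
    linarith [norm_le_norm_add_norm_sub' (f z) (f 0), norm_sub_rev (f z) (f 0)]
  have hA0 : 0 ≤ (1 - ‖z‖ ^ 2) ^ (α - 1) := (Real.rpow_pos_of_pos (one_sub_norm_sq_pos hz) _).le
  have hA1 : (1 - ‖z‖ ^ 2) ^ (α - 1) ≤ 1 :=
    Real.rpow_le_one (one_sub_norm_sq_pos hz).le (by nlinarith [norm_nonneg z]) (by linarith)
  have hprod := one_sub_rpow_neg_mul_one_sub_sq_rpow_le (norm_nonneg z) hz1 (by linarith : 0 ≤ α - 1)
  calc ‖f z‖ * (1 - ‖z‖ ^ 2) ^ (α - 1)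
      ≤ (‖f 0‖ + M / (α - 1) * (1 - ‖z‖) ^ (-(α - 1))) * (1 - ‖z‖ ^ 2) ^ (α - 1) :=
        mul_le_mul_of_nonneg_right hgrowth hA0
    _ = ‖f 0‖ * (1 - ‖z‖ ^ 2) ^ (α - 1) +
          M / (α - 1) * ((1 - ‖z‖) ^ (-(α - 1)) * (1 - ‖z‖ ^ 2) ^ (α - 1)) := by ring
    _ ≤ ‖f 0‖ * 1 + M / (α - 1) * 2 ^ (α - 1) := by
        gcongr
    _ = ‖f 0‖ + 2 ^ (α - 1) / (α - 1) * M := by ring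

lemma half_one_sub_norm_le_one_sub_norm_sq {z w : ℂ} (hz : ‖z‖ < 1)
    (hw : ‖w - z‖ ≤ (1 - ‖z‖) / 2) : (1 - ‖z‖) / 2 ≤ 1 - ‖w‖ ^ 2 := by
  have hwz : ‖w‖ ≤ ‖z‖ + ‖w - z‖ := norm_le_norm_add_norm_sub' w z
  nlinarith [norm_nonneg w, norm_nonneg z]

lemma norm_deriv_mul_weight_le {α : ℝ} (hα : 1 ≤ α) {f : ℂ → ℂ}
    (hf : DifferentiableOn ℂ f UD) {S : ℝ}
    (hS : ∀ w ∈ UD, ‖f w‖ * (1 - ‖w‖ ^ 2) ^ (α - 1) ≤ S) {z : ℂ} (hz : z ∈ UD) :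
    ‖deriv f z‖ * (1 - ‖z‖ ^ 2) ^ α ≤ 4 ^ α * S := by
  have hz1 := mem_UD_iff.mp hz
  set ρ := (1 - ‖z‖) / 2
  have hρ : 0 < ρ := by simp only [ρ]; linarith
  have hS0 : 0 ≤ S := (norm_nonneg _).trans (by simpa using hS 0 zero_mem_UD)
  have hweight : ∀ w ∈ Metric.closedBall z ρ, ρ ≤ 1 - ‖w‖ ^ 2 := fun w hw =>
    half_one_sub_norm_le_one_sub_norm_sq hz1 (by rwa [Metric.mem_closedBall, dist_eq_norm] at hw)
  have hsub : Metric.closedBall z ρ ⊆ UD := fun w hw => mem_UD_iff.mpr <| by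
    nlinarith [hweight w hw, norm_nonneg w]
  have hdc : DiffContOnCl ℂ f (Metric.ball z ρ) :=
    ⟨hf.mono (Metric.ball_subset_closedBall.trans hsub),
      hf.continuousOn.mono (Metric.closure_ball_subset_closedBall.trans hsub)⟩
  have hsphere : ∀ w ∈ Metric.sphere z ρ, ‖f w‖ ≤ S / ρ ^ (α - 1) := fun w hw => by
    have hw' := Metric.sphere_subset_closedBall hw
    rw [le_div_iff₀ (Real.rpow_pos_of_pos hρ _)]
    exact le_trans (mul_le_mul_of_nonneg_left
      (Real.rpow_le_rpow hρ.le (hweight w hw') (by linarith)) (norm_nonneg _)) (hS w (hsub hw'))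
  have hcauchy : ‖deriv f z‖ ≤ S / ρ ^ α := by
    have h := Complex.norm_deriv_le_of_forall_mem_sphere_norm_le hρ hdc hsphere
    rwa [div_div, ← Real.rpow_add_one hρ.ne', sub_add_cancel] at h
  have hA0 : 0 ≤ 1 - ‖z‖ ^ 2 := (one_sub_norm_sq_pos hz).le
  have hratio : (1 - ‖z‖ ^ 2) / ρ ≤ 4 := by
    rw [div_le_iff₀ hρ]
    simp only [ρ]
    nlinarith [norm_nonneg z]
  calc ‖deriv f z‖ * (1 - ‖z‖ ^ 2) ^ α
      ≤ S / ρ ^ α * (1 - ‖z‖ ^ 2) ^ α := by gcongr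
    _ = S * ((1 - ‖z‖ ^ 2) / ρ) ^ α := by rw [Real.div_rpow hA0 hρ.le]; ring
    _ ≤ S * 4 ^ α := by gcongr
    _ = 4 ^ α * S := mul_comm _ _

def weightedSup (β : ℝ) (g : ℂ → ℂ) : ℝ≥0∞ :=
  ⨆ z ∈ UD, ENNReal.ofReal (‖g z‖ * (1 - ‖z‖ ^ 2) ^ β)

lemma le_weightedSup {β : ℝ} {g : ℂ → ℂ} {z : ℂ} (hz : z ∈ UD) :
    ENNReal.ofReal (‖g z‖ * (1 - ‖z‖ ^ 2) ^ β) ≤ weightedSup β g :=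
  le_iSup₂ (f := fun z (_ : z ∈ UD) => ENNReal.ofReal (‖g z‖ * (1 - ‖z‖ ^ 2) ^ β)) z hz

lemma ofReal_norm_le_weightedSup (β : ℝ) (g : ℂ → ℂ) :
    ENNReal.ofReal ‖g 0‖ ≤ weightedSup β g := by
  simpa using le_weightedSup (β := β) (g := g) zero_mem_UD

lemma le_toReal_weightedSup {β : ℝ} {g : ℂ → ℂ} (h : weightedSup β g ≠ ⊤) {z : ℂ} (hz : z ∈ UD) :
    ‖g z‖ * (1 - ‖z‖ ^ 2) ^ β ≤ (weightedSup β g).toReal :=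
  (ENNReal.ofReal_le_iff_le_toReal h).mp (le_weightedSup hz)

lemma weightedSup_le_ofReal {β C : ℝ} {g : ℂ → ℂ}
    (h : ∀ z ∈ UD, ‖g z‖ * (1 - ‖z‖ ^ 2) ^ β ≤ C) : weightedSup β g ≤ ENNReal.ofReal C :=
  iSup₂_le fun z hz => ENNReal.ofReal_le_ofReal (h z hz)

lemma weightedSup_deriv_le {α : ℝ} (hα : 1 ≤ α) {f : ℂ → ℂ} (hf : DifferentiableOn ℂ f UD) :
    weightedSup α (deriv f) ≤ ENNReal.ofReal (4 ^ α) * weightedSup (α - 1) f := by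
  by_cases htop : weightedSup (α - 1) f = ⊤
  · rw [htop, ENNReal.mul_top (by positivity)]
    exact le_top
  rw [← ENNReal.ofReal_toReal htop, ← ENNReal.ofReal_mul (by positivity)]
  exact weightedSup_le_ofReal fun z hz =>
    norm_deriv_mul_weight_le hα hf (fun w hw => le_toReal_weightedSup htop hw) hz

lemma weightedSup_le_of_deriv {α : ℝ} (hα : 1 < α) {f : ℂ → ℂ} (hf : DifferentiableOn ℂ f UD)
    (htop : weightedSup α (deriv f) ≠ ⊤) :
    weightedSup (α - 1) f ≤ ENNReal.ofReal (1 + 2 ^ (α - 1) / (α - 1)) *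
      (ENNReal.ofReal ‖f 0‖ + weightedSup α (deriv f)) := by
  have hq : 0 ≤ 2 ^ (α - 1) / (α - 1) := div_nonneg (by positivity) (by linarith)
  have hM : 0 ≤ (weightedSup α (deriv f)).toReal := ENNReal.toReal_nonneg
  rw [← ENNReal.ofReal_toReal htop, ← ENNReal.ofReal_add (norm_nonneg _) hM,
    ← ENNReal.ofReal_mul (by positivity)]
  refine weightedSup_le_ofReal fun z hz => ?_
  have h := norm_mul_weight_le_of_deriv hα hf (fun w hw => le_toReal_weightedSup htop hw) hz
  nlinarith [norm_nonneg (f 0)]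

/-- equivalent seminorm on the α-Bloch space. -/
theorem stmt9 (α : ℝ) (hα : 1 < α) :
    ∃ c₁ c₂ : ℝ, 0 < c₁ ∧ 0 < c₂ ∧ ∀ f : ℂ → ℂ, DifferentiableOn ℂ f UD →
      (⨆ z ∈ UD, ENNReal.ofReal (‖deriv f z‖ * (1 - ‖z‖ ^ 2) ^ α)) < ⊤ →
      (ENNReal.ofReal c₁ * (ENNReal.ofReal (‖f 0‖) +
          ⨆ z ∈ UD, ENNReal.ofReal (‖deriv f z‖ * (1 - ‖z‖ ^ 2) ^ α)) ≤
        ⨆ z ∈ UD, ENNReal.ofReal (‖f z‖ * (1 - ‖z‖ ^ 2) ^ (α - 1))) ∧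
      ((⨆ z ∈ UD, ENNReal.ofReal (‖f z‖ * (1 - ‖z‖ ^ 2) ^ (α - 1))) ≤
        ENNReal.ofReal c₂ * (ENNReal.ofReal (‖f 0‖) +
          ⨆ z ∈ UD, ENNReal.ofReal (‖deriv f z‖ * (1 - ‖z‖ ^ 2) ^ α))) := by
  have hc₁ : (0 : ℝ) < 1 + 4 ^ α := by positivity
  have hc₂ : (0 : ℝ) < 1 + 2 ^ (α - 1) / (α - 1) :=
    add_pos_of_pos_of_nonneg one_pos (div_nonneg (by positivity) (by linarith))
  refine ⟨(1 + 4 ^ α)⁻¹, 1 + 2 ^ (α - 1) / (α - 1), inv_pos.mpr hc₁, hc₂,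
    fun f hf htop => ⟨?_, weightedSup_le_of_deriv hα hf htop.ne⟩⟩
  change ENNReal.ofReal (1 + 4 ^ α)⁻¹ * (ENNReal.ofReal ‖f 0‖ + weightedSup α (deriv f)) ≤
    weightedSup (α - 1) f
  rw [ENNReal.ofReal_inv_of_pos hc₁,
    ENNReal.inv_mul_le_iff (by simpa using hc₁) ENNReal.ofReal_ne_top,
    ENNReal.ofReal_add zero_le_one (by positivity), ENNReal.ofReal_one, add_mul, one_mul]
  exact add_le_add (ofReal_norm_le_weightedSup _ f) (weightedSup_deriv_le hα.le hf)
end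
end

section
/- Let 0 < s ≤ 1 and let μ be a positive finite Borel s-Carleson measure on D. For 0 < r < 1 let μ_r be the restriction of μ to {z ∈ D : |z| < r}. Then μ is a vanishing s-Carleson measure (i.e. μ(S(I))/|I|^s → 0 as |I| → 0) if and only if ‖μ - μ_r‖_{CM_s} → 0 as r → 1⁻, where ‖ν‖_{CM_s} = sup_{I⊂∂D} ν(S(I))/|I|^s. -/
open MeasureTheory Complex Real Filter ENNReal NNReal

noncomputable section

open Topology

/-!
A tent of height `h` lies in the annulus `1 - h < |z| < 1`. If `μ` is vanishing Carleson, tents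
of height `h < δ` are controlled directly, while for `h ≥ δ` the truncated tent lies in a thin
annulus `1 - t ≤ |z| < 1`, whose measure tends to `0` as `t → 0⁺` by continuity from above of the
finite measure `μ`, so it is eventually below `ε (δ/2)^s ≤ ε h^s`. Conversely, a tent of height
`h < 1 - r` lies in `{r ≤ |z|}` and so coincides with its truncation.
-/

theorem tendsto_measure_norm_mem_Ico_nhdsGT_zero {E : Type*} [NormedAddCommGroup E]
    [MeasurableSpace E] [OpensMeasurableSpace E] (μ : Measure E) [IsFiniteMeasure μ] (R : ℝ) :
    Tendsto (fun t : ℝ => μ {x | ‖x‖ ∈ Set.Ico (R - t) R}) (𝓝[>] 0) (𝓝 0) := by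
  have hempty : ⋂ t > (0 : ℝ), {x : E | ‖x‖ ∈ Set.Ico (R - t) R} = ∅ := by
    refine Set.eq_empty_of_forall_notMem fun x hx => ?_
    simp only [Set.mem_iInter, Set.mem_ofPred_eq, Set.mem_Ico] at hx
    have hxR := (hx 1 one_pos).2
    have := (hx ((R - ‖x‖) / 2) (by linarith)).1
    linarith
  have := tendsto_measure_biInter_gt (μ := μ) (a := (0 : ℝ))
    (s := fun t => {x : E | ‖x‖ ∈ Set.Ico (R - t) R})
    (fun t _ => (measurableSet_Ico.preimage continuous_norm.measurable).nullMeasurableSet)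
    (fun t t' _ htt' x hx => ⟨by linarith [hx.1], hx.2⟩) ⟨1, one_pos, measure_ne_top μ _⟩
  rwa [hempty, measure_empty] at this

theorem norm_lt_one_of_mem_tent {θ h : ℝ} {z : ℂ} (hz : z ∈ tent θ h) : ‖z‖ < 1 :=
  hz.1

theorem tent_subset_setOf_le_norm {θ h r : ℝ} (hr : h ≤ 1 - r) :
    tent θ h ⊆ {z : ℂ | r ≤ ‖z‖} := fun z hz => by
  have := hz.2.1
  simp only [Set.mem_ofPred_eq]
  linarith

theorem stmt12_general (s : ℝ) (hs0 : 0 < s) (μ : Measure ℂ) [IsFiniteMeasure μ] :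
    (∀ ε : ℝ, 0 < ε → ∃ δ : ℝ, 0 < δ ∧ ∀ θ h : ℝ, 0 < h → h < δ →
        μ (tent θ h) ≤ ENNReal.ofReal (ε * h ^ s)) ↔
    (∀ ε : ℝ, 0 < ε → ∃ r₀ : ℝ, r₀ < 1 ∧ ∀ r : ℝ, r₀ < r → r < 1 →
        ∀ θ h : ℝ, 0 < h → h ≤ 1 →
          μ (tent θ h ∩ {z : ℂ | r ≤ ‖z‖}) ≤ ENNReal.ofReal (ε * h ^ s)) := by
  constructor
  · intro hvanish ε hε
    obtain ⟨δ, hδ, hsmall⟩ := hvanish ε hε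
    have hpos : 0 < ENNReal.ofReal (ε * (δ / 2) ^ s) := by
      rw [ENNReal.ofReal_pos]; positivity
    obtain ⟨t, hμt, htpos⟩ := (((tendsto_measure_norm_mem_Ico_nhdsGT_zero μ 1).eventually_lt_const
      hpos).and self_mem_nhdsWithin).exists
    refine ⟨1 - t, by linarith [show 0 < t from htpos], fun r hr _ θ h hh _ => ?_⟩
    rcases lt_or_ge h δ with hhδ | hδh
    · exact (measure_mono Set.inter_subset_left).trans (hsmall θ h hh hhδ)
    · have hannulus : tent θ h ∩ {z : ℂ | r ≤ ‖z‖} ⊆ {z | ‖z‖ ∈ Set.Ico (1 - t) 1} :=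
        fun z hz => ⟨hr.le.trans hz.2, norm_lt_one_of_mem_tent hz.1⟩
      calc μ (tent θ h ∩ {z : ℂ | r ≤ ‖z‖}) ≤ ENNReal.ofReal (ε * (δ / 2) ^ s) :=
            (measure_mono hannulus).trans hμt.le
        _ ≤ ENNReal.ofReal (ε * h ^ s) := by gcongr; linarith
  · intro htrunc ε hε
    obtain ⟨r₀, hr₀, htail⟩ := htrunc ε hε
    obtain ⟨r, hr, hr1⟩ := exists_between (max_lt hr₀ one_pos)
    refine ⟨1 - r, by linarith, fun θ h hh hhr => ?_⟩
    calc μ (tent θ h) ≤ μ (tent θ h ∩ {z : ℂ | r ≤ ‖z‖}) :=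
          measure_mono (Set.subset_inter subset_rfl (tent_subset_setOf_le_norm hhr.le))
      _ ≤ ENNReal.ofReal (ε * h ^ s) :=
          htail r ((le_max_left _ _).trans_lt hr) hr1 θ h hh (by linarith [le_max_right r₀ 0])

/-- vanishing s-Carleson measures via truncation. -/
theorem stmt12 (s : ℝ) (hs0 : 0 < s) (hs1 : s ≤ 1) (μ : Measure ℂ) [IsFiniteMeasure μ]
    (M : ℝ) (hμ : ∀ θ h : ℝ, 0 < h → h ≤ 1 → μ (tent θ h) ≤ ENNReal.ofReal (M * h ^ s)) :
    (∀ ε : ℝ, 0 < ε → ∃ δ : ℝ, 0 < δ ∧ ∀ θ h : ℝ, 0 < h → h < δ →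
        μ (tent θ h) ≤ ENNReal.ofReal (ε * h ^ s)) ↔
    (∀ ε : ℝ, 0 < ε → ∃ r₀ : ℝ, r₀ < 1 ∧ ∀ r : ℝ, r₀ < r → r < 1 →
        ∀ θ h : ℝ, 0 < h → h ≤ 1 →
          μ (tent θ h ∩ {z : ℂ | r ≤ ‖z‖}) ≤ ENNReal.ofReal (ε * h ^ s)) :=
  stmt12_general s hs0 μ
end
end

section
/- Let 0 < t < s ≤ 1, γ = (s-t)/2, and let μ be an s-Carleson measure on D. Then there is a constant C such that for every f ∈ Q_t and every subarc I ⊆ ∂D with base point a_I = (1-|I|)e^{iθ} (e^{iθ} the center of I), (1-|a_I|²)^{s-2γ} ∫_{S(I)} ∫_D |f'(w)|² (1-|w|²)^{2s-2γ} / (|1 - ā_I w|^{2(s-2γ)} |1 - w̄ z|^{2s}) dA(w) dμ(z) ≤ C ‖μ‖_{CM_s} ‖f‖²_{Q_t}. -/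
open MeasureTheory Complex Real Filter ENNReal NNReal

noncomputable section

/-!
By Tonelli, the `z`-integral over the tent can be taken first. For `w` in the disc and
`δ ≤ 1/2`, the points `z` of the disc with `|1 - w̄ z| < δ` lie in the tent of size `δ` centred at
`arg w`, so the `s`-Carleson condition bounds these sublevel sets by `δ ^ s`, and the layer-cake
formula turns this into `∫_{S(I)} |1 - w̄ z|^{-2s} dμ(z) ≲ M (1 - |w|)^{-s}`. As
`(1 - |w|²)^s (1 - |w|)^{-s} ≤ 2^s`, the identity `1 - |φ_a(w)|² = (1 - |a|²)(1 - |w|²)/|1 - ā w|²`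
leaves `∫_D |f'(w)|² (1 - |φ_a(w)|²)^t dA(w) ≤ ‖f‖²_{Q_t}`, with `a = a_I`.
-/

open Set

lemma one_sub_norm_mul_le_norm_one_sub_conj_mul (w z : ℂ) :
    1 - ‖w‖ * ‖z‖ ≤ ‖1 - (starRingEnd ℂ) w * z‖ := by
  simpa [norm_mul] using norm_sub_norm_le (1 : ℂ) ((starRingEnd ℂ) w * z)

lemma one_sub_conj_mul_ne_zero {w z : ℂ} (hw : ‖w‖ < 1) (hz : ‖z‖ ≤ 1) :
    1 - (starRingEnd ℂ) w * z ≠ 0 := by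
  rw [← norm_pos_iff]
  nlinarith [one_sub_norm_mul_le_norm_one_sub_conj_mul w z, norm_nonneg w, norm_nonneg z]

lemma one_sub_norm_moeb_sq {a z : ℂ} (hne : 1 - (starRingEnd ℂ) a * z ≠ 0) :
    1 - ‖moeb a z‖ ^ 2 = (1 - ‖a‖ ^ 2) * (1 - ‖z‖ ^ 2) / ‖1 - (starRingEnd ℂ) a * z‖ ^ 2 := by
  have hB : ‖1 - (starRingEnd ℂ) a * z‖ ^ 2 ≠ 0 := by positivity
  rw [moeb, norm_div, div_pow, eq_div_iff hB, sub_mul, div_mul_cancel₀ _ hB]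
  simp only [Complex.sq_norm, Complex.normSq_apply, Complex.mul_re, Complex.mul_im,
    Complex.sub_re, Complex.sub_im, Complex.one_re, Complex.one_im, Complex.conj_re,
    Complex.conj_im]
  ring

lemma abs_arg_le_pi_mul_of_norm_one_sub_lt {u : ℂ} {δ : ℝ} (hδ : δ ≤ 1 / 2)
    (hu : ‖1 - u‖ < δ) : |Complex.arg u| ≤ π * δ := by
  have hu_half : 1 / 2 < ‖u‖ := by
    have := norm_sub_norm_le (1 : ℂ) u
    rw [norm_one] at this
    linarith
  have hcos : 1 - Real.cos (Complex.arg u) < δ ^ 2 := by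
    have hsq : ‖1 - u‖ ^ 2 = (1 - ‖u‖) ^ 2 + 2 * ‖u‖ * (1 - Real.cos (Complex.arg u)) := by
      have hre := Complex.norm_mul_cos_arg u
      have hnorm : ‖u‖ ^ 2 = u.re ^ 2 + u.im ^ 2 := by
        rw [Complex.sq_norm, Complex.normSq_apply]; ring
      rw [Complex.sq_norm, Complex.normSq_apply]
      simp only [Complex.sub_re, Complex.sub_im, Complex.one_re, Complex.one_im]
      nlinarith
    nlinarith [Real.cos_le_one (Complex.arg u), sq_nonneg (1 - ‖u‖), norm_nonneg (1 - u)]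
  have hjordan := Real.cos_le_one_sub_mul_cos_sq (Complex.abs_arg_le_pi u)
  have hδ0 : 0 < δ := (norm_nonneg _).trans_lt hu
  refine abs_le_of_sq_le_sq ?_ (by positivity)
  have : 2 / π ^ 2 * Complex.arg u ^ 2 < δ ^ 2 := by linarith
  rw [div_mul_eq_mul_div, div_lt_iff₀ (by positivity)] at this
  nlinarith [sq_nonneg (Complex.arg u)]

lemma mem_tent_arg_of_norm_one_sub_conj_mul_lt {w z : ℂ} {δ : ℝ} (hw : ‖w‖ ≤ 1)
    (hz : ‖z‖ < 1) (hδ : δ ≤ 1 / 2) (h : ‖1 - (starRingEnd ℂ) w * z‖ < δ) :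
    z ∈ tent (Complex.arg w) δ := by
  set u := (starRingEnd ℂ) w * z with hu
  have hnorm := one_sub_norm_mul_le_norm_one_sub_conj_mul w z
  have hu0 : u ≠ 0 := by
    rintro h0
    rw [h0, sub_zero, norm_one] at h
    linarith
  have hw0 : w ≠ 0 := by rintro rfl; simp [hu] at hu0
  have hz0 : z ≠ 0 := by rintro rfl; simp [hu] at hu0
  refine ⟨hz, by nlinarith [norm_nonneg z], Complex.arg w + Complex.arg u,
    by simpa using abs_arg_le_pi_mul_of_norm_one_sub_lt hδ h, ?_⟩
  have hexp : ∀ x : ℂ, x ≠ 0 → Complex.exp (Complex.arg x * Complex.I) = x / ‖x‖ := fun x hx => by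
    rw [eq_div_iff (by simpa using hx), mul_comm]
    exact Complex.norm_mul_exp_arg_mul_I x
  have hwn : (‖w‖ : ℂ) ≠ 0 := by simpa using hw0
  have hzn : (‖z‖ : ℂ) ≠ 0 := by simpa using hz0
  push_cast
  rw [add_mul, Complex.exp_add, hexp w hw0, hexp u hu0, hu, norm_mul, Complex.norm_conj]
  push_cast
  field_simp
  exact (Complex.mul_conj' w).symm

lemma one_sub_norm_sq_rpow_mul_le_two_rpow_mul_moeb {a w : ℂ} {s t : ℝ} (hs : 0 ≤ s) (ha : ‖a‖ < 1)
    (hw : ‖w‖ < 1) :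
    (1 - ‖a‖ ^ 2) ^ t * (1 - ‖w‖ ^ 2) ^ (s + t) / ‖1 - (starRingEnd ℂ) a * w‖ ^ (2 * t) *
        (1 - ‖w‖) ^ (-s) ≤ 2 ^ s * (1 - ‖moeb a w‖ ^ 2) ^ t := by
  have hA : 0 < 1 - ‖a‖ ^ 2 := by nlinarith [norm_nonneg a]
  have hW : 0 < 1 - ‖w‖ ^ 2 := by nlinarith [norm_nonneg w]
  have hK : 0 < 1 - ‖w‖ := by linarith
  have hB : 0 < ‖1 - (starRingEnd ℂ) a * w‖ := norm_pos_iff.mpr (one_sub_conj_mul_ne_zero ha hw.le)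
  have hmoeb : (1 - ‖moeb a w‖ ^ 2) ^ t =
      (1 - ‖a‖ ^ 2) ^ t * (1 - ‖w‖ ^ 2) ^ t / ‖1 - (starRingEnd ℂ) a * w‖ ^ (2 * t) := by
    rw [one_sub_norm_moeb_sq (one_sub_conj_mul_ne_zero ha hw.le),
      Real.div_rpow (by positivity) (by positivity), Real.mul_rpow hA.le hW.le,
      Real.rpow_mul hB.le, Real.rpow_two]
  have hsplit : (1 - ‖w‖ ^ 2) ^ (s + t) = (1 + ‖w‖) ^ s * (1 - ‖w‖) ^ s * (1 - ‖w‖ ^ 2) ^ t := by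
    rw [Real.rpow_add hW, ← Real.mul_rpow (by positivity) hK.le]
    congr 2
    ring
  calc (1 - ‖a‖ ^ 2) ^ t * (1 - ‖w‖ ^ 2) ^ (s + t) / ‖1 - (starRingEnd ℂ) a * w‖ ^ (2 * t) *
        (1 - ‖w‖) ^ (-s)
      = (1 + ‖w‖) ^ s * ((1 - ‖w‖) ^ s * (1 - ‖w‖) ^ (-s)) *
          ((1 - ‖a‖ ^ 2) ^ t * (1 - ‖w‖ ^ 2) ^ t / ‖1 - (starRingEnd ℂ) a * w‖ ^ (2 * t)) := by
        rw [hsplit]; ring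
    _ = (1 + ‖w‖) ^ s * (1 - ‖moeb a w‖ ^ 2) ^ t := by
        rw [← Real.rpow_add hK, add_neg_cancel, Real.rpow_zero, mul_one, hmoeb]
    _ ≤ 2 ^ s * (1 - ‖moeb a w‖ ^ 2) ^ t := by
        have : 0 ≤ (1 - ‖moeb a w‖ ^ 2) ^ t := by rw [hmoeb]; positivity
        gcongr
        linarith

lemma setOf_lt_rpow_neg_subset {α : Type*} {m : α → ℝ} (hm0 : ∀ x, 0 ≤ m x) {p l : ℝ}
    (hp : 0 < p) (hl : 0 < l) : {x | l < m x ^ (-p)} ⊆ {x | m x < l ^ (-p⁻¹)} := by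
  intro x hx
  -- `0 ^ (-p) = 0`, so zeros of `m` never lie above a positive level.
  rcases (hm0 x).eq_or_lt with h0 | hpos
  · change l < m x ^ (-p) at hx
    rw [← h0, Real.zero_rpow (by simpa using hp.ne')] at hx
    exact absurd hx hl.not_gt
  · calc m x = (m x ^ (-p)) ^ (-p⁻¹) := by
          rw [← Real.rpow_mul hpos.le, neg_mul_neg, mul_inv_cancel₀ hp.ne', Real.rpow_one]
      _ < l ^ (-p⁻¹) := Real.rpow_lt_rpow_of_neg hl hx (by simpa using hp)

lemma integral_mul_rpow_neg_div (C : ℝ) {p s d : ℝ} (hp : 0 < p) (hsp : s < p) (hd : 0 < d) :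
    ∫ l in (0 : ℝ)..d ^ (-p), C * l ^ (-(s / p)) = p / (p - s) * C * d ^ (s - p) := by
  have hr : -1 < -(s / p) := by rw [neg_lt_neg_iff, div_lt_one hp]; exact hsp
  have hexp : -(s / p) + 1 = (p - s) / p := by field_simp; ring
  rw [intervalIntegral.integral_const_mul, integral_rpow (Or.inl hr), hexp,
    Real.zero_rpow (div_pos (sub_pos.mpr hsp) hp).ne', sub_zero, ← Real.rpow_mul hd.le,
    show -p * ((p - s) / p) = s - p by field_simp; ring]
  field_simp

lemma lintegral_rpow_neg_le_of_measure_lt_le {α : Type*} [MeasurableSpace α] {ν : Measure α}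
    {m : α → ℝ} {p s C d : ℝ} (hm : Measurable m) (hm0 : ∀ x, 0 ≤ m x) (hp : 0 < p)
    (hsp : s < p) (hd : 0 < d) (hC : 0 ≤ C)
    (hν : ∀ δ, 0 < δ → ν {x | m x < δ} ≤ ENNReal.ofReal (C * δ ^ s))
    (hνd : ν {x | m x < d} = 0) :
    ∫⁻ x, ENNReal.ofReal (m x ^ (-p)) ∂ν ≤ ENNReal.ofReal (p / (p - s) * C * d ^ (s - p)) := by
  set b := d ^ (-p) with hb_def
  have hb : 0 < b := by positivity
  have hlevel : ∀ l ∈ Ioi (0 : ℝ), ν {x | l < m x ^ (-p)} ≤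
      (Ioc 0 b).indicator (fun l => ENNReal.ofReal (C * l ^ (-(s / p)))) l := by
    intro l hl
    have hsub := setOf_lt_rpow_neg_subset hm0 hp hl
    by_cases hlb : l ≤ b
    · rw [indicator_of_mem (show l ∈ Ioc 0 b from ⟨hl, hlb⟩)]
      calc ν {x | l < m x ^ (-p)} ≤ ν {x | m x < l ^ (-p⁻¹)} := measure_mono hsub
        _ ≤ ENNReal.ofReal (C * (l ^ (-p⁻¹)) ^ s) := hν _ (Real.rpow_pos_of_pos hl _)
        _ = ENNReal.ofReal (C * l ^ (-(s / p))) := by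
            rw [← Real.rpow_mul hl.le, neg_mul, inv_mul_eq_div]
    · rw [indicator_of_notMem (fun h => hlb h.2), nonpos_iff_eq_zero, ← nonpos_iff_eq_zero]
      have hld : l ^ (-p⁻¹) < d := by
        calc l ^ (-p⁻¹) < b ^ (-p⁻¹) :=
              Real.rpow_lt_rpow_of_neg hb (not_le.mp hlb) (by simpa using hp)
          _ = d := by
            rw [hb_def, ← Real.rpow_mul hd.le, neg_mul_neg, mul_inv_cancel₀ hp.ne', Real.rpow_one]
      exact (measure_mono (hsub.trans fun x hx => lt_trans hx hld)).trans hνd.le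
  have hint : IntegrableOn (fun l : ℝ => C * l ^ (-(s / p))) (Ioc 0 b) :=
    (intervalIntegrable_iff_integrableOn_Ioc_of_le hb.le).mp
      ((intervalIntegral.intervalIntegrable_rpow'
        (by rw [neg_lt_neg_iff, div_lt_one hp]; exact hsp)).const_mul C)
  calc ∫⁻ x, ENNReal.ofReal (m x ^ (-p)) ∂ν = ∫⁻ l in Ioi 0, ν {x | l < m x ^ (-p)} :=
        lintegral_eq_lintegral_meas_lt ν (ae_of_all _ fun x => Real.rpow_nonneg (hm0 x) _)
          (hm.pow_const _).aemeasurable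
    _ ≤ ∫⁻ l in Ioi 0, (Ioc 0 b).indicator (fun l => ENNReal.ofReal (C * l ^ (-(s / p)))) l :=
        setLIntegral_mono' measurableSet_Ioi hlevel
    _ = ∫⁻ l in Ioc 0 b, ENNReal.ofReal (C * l ^ (-(s / p))) := by
        rw [lintegral_indicator measurableSet_Ioc, Measure.restrict_restrict measurableSet_Ioc,
          inter_eq_self_of_subset_left Ioc_subset_Ioi_self]
    _ = ENNReal.ofReal (∫ l in (0 : ℝ)..b, C * l ^ (-(s / p))) := by
        rw [intervalIntegral.integral_of_le hb.le, ofReal_integral_eq_lintegral_ofReal hint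
          ((ae_restrict_iff' measurableSet_Ioc).mpr (ae_of_all _ fun l hl =>
            mul_nonneg hC (Real.rpow_nonneg hl.1.le _)))]
    _ = ENNReal.ofReal (p / (p - s) * C * d ^ (s - p)) := by
        rw [integral_mul_rpow_neg_div C hp hsp hd]

lemma lintegral_lintegral_div_norm_one_sub_conj_mul_rpow {ν : Measure ℂ} [SFinite ν]
    {k : ℂ → ℝ} (hk : Measurable k) (p : ℝ) :
    ∫⁻ z, (∫⁻ w in UD, ENNReal.ofReal (k w / ‖1 - (starRingEnd ℂ) w * z‖ ^ p)) ∂ν =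
      ∫⁻ w in UD, ENNReal.ofReal (k w) *
        ∫⁻ z, ENNReal.ofReal (‖1 - (starRingEnd ℂ) w * z‖ ^ (-p)) ∂ν := by
  rw [lintegral_lintegral_swap (by fun_prop)]
  refine lintegral_congr fun w => ?_
  rw [← lintegral_const_mul' _ _ ENNReal.ofReal_ne_top]
  refine lintegral_congr fun z => ?_
  rw [← ENNReal.ofReal_mul' (Real.rpow_nonneg (norm_nonneg _) _), Real.rpow_neg (norm_nonneg _),
    div_eq_mul_inv]

def IsCarlesonMeasure (s M : ℝ) (μ : Measure ℂ) : Prop :=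
  ∀ θ h : ℝ, 0 < h → h ≤ 1 → μ (tent θ h) ≤ ENNReal.ofReal (M * h ^ s)

lemma measurableSet_UD : MeasurableSet UD := Metric.isOpen_ball.measurableSet

lemma tent_subset_UD (θ h : ℝ) : tent θ h ⊆ UD := fun _ hz => mem_ball_zero_iff.mpr hz.1

lemma measurableSet_norm_one_sub_conj_mul_lt (w : ℂ) (δ : ℝ) :
    MeasurableSet {z : ℂ | ‖1 - (starRingEnd ℂ) w * z‖ < δ} :=
  measurableSet_lt (by fun_prop) measurable_const

lemma measure_restrict_norm_one_sub_conj_mul_lt_one_sub_norm {μ : Measure ℂ} {E : Set ℂ}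
    (hE : E ⊆ UD) (w : ℂ) :
    μ.restrict E {z | ‖1 - (starRingEnd ℂ) w * z‖ < 1 - ‖w‖} = 0 := by
  rw [Measure.restrict_apply (measurableSet_norm_one_sub_conj_mul_lt w _)]
  convert measure_empty (μ := μ)
  refine eq_empty_of_forall_notMem fun z ⟨hlt, hz⟩ => ?_
  have hz1 : ‖z‖ < 1 := mem_ball_zero_iff.mp (hE hz)
  nlinarith [hlt.out, one_sub_norm_mul_le_norm_one_sub_conj_mul w z, norm_nonneg w]

namespace IsCarlesonMeasure

variable {μ : Measure ℂ} {s M : ℝ}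

lemma measure_tent_le (hμ : IsCarlesonMeasure s M μ) (hs : 0 ≤ s) (hM : 0 ≤ M) (θ : ℝ)
    {h : ℝ} (hh0 : 0 < h) (hh1 : h ≤ 1) : μ (tent θ h) ≤ ENNReal.ofReal M :=
  (hμ θ h hh0 hh1).trans <| ENNReal.ofReal_le_ofReal <|
    mul_le_of_le_one_right hM (Real.rpow_le_one hh0.le hh1 hs)

/-- Sublevel sets of `z ↦ |1 - w̄ z|` are controlled by the tent `S(arg w, δ)` when `δ ≤ 1/2`,
and by the whole of `E` otherwise. -/
lemma measure_restrict_norm_one_sub_conj_mul_lt_le (hμ : IsCarlesonMeasure s M μ) (hs : 0 ≤ s)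
    (hM : 0 ≤ M) {E : Set ℂ} (hE : E ⊆ UD) (hμE : μ E ≤ ENNReal.ofReal M) {w : ℂ}
    (hw : ‖w‖ ≤ 1) {δ : ℝ} (hδ : 0 < δ) :
    μ.restrict E {z | ‖1 - (starRingEnd ℂ) w * z‖ < δ} ≤ ENNReal.ofReal (2 ^ s * M * δ ^ s) := by
  rw [Measure.restrict_apply (measurableSet_norm_one_sub_conj_mul_lt w δ)]
  by_cases hδ2 : δ ≤ 1 / 2
  · calc μ ({z | ‖1 - (starRingEnd ℂ) w * z‖ < δ} ∩ E) ≤ μ (tent (Complex.arg w) δ) :=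
          measure_mono fun z ⟨hlt, hz⟩ =>
            mem_tent_arg_of_norm_one_sub_conj_mul_lt hw (mem_ball_zero_iff.mp (hE hz)) hδ2 hlt
      _ ≤ ENNReal.ofReal (M * δ ^ s) := hμ _ δ hδ (by linarith)
      _ ≤ ENNReal.ofReal (2 ^ s * M * δ ^ s) := by
          gcongr
          exact le_mul_of_one_le_left hM (Real.one_le_rpow (by norm_num) hs)
  · calc μ ({z | ‖1 - (starRingEnd ℂ) w * z‖ < δ} ∩ E) ≤ μ E := measure_mono inter_subset_right
      _ ≤ ENNReal.ofReal M := hμE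
      _ ≤ ENNReal.ofReal (2 ^ s * M * δ ^ s) := by
          gcongr
          rw [mul_comm (2 ^ s), mul_assoc, ← Real.mul_rpow (by norm_num) hδ.le]
          exact le_mul_of_one_le_right hM (Real.one_le_rpow (by linarith) hs)

lemma lintegral_norm_one_sub_conj_mul_rpow_neg_le (hμ : IsCarlesonMeasure s M μ) (hs : 0 ≤ s)
    (hM : 0 ≤ M) {E : Set ℂ} (hE : E ⊆ UD) (hμE : μ E ≤ ENNReal.ofReal M) {p : ℝ} (hsp : s < p)
    {w : ℂ} (hw : ‖w‖ < 1) :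
    ∫⁻ z in E, ENNReal.ofReal (‖1 - (starRingEnd ℂ) w * z‖ ^ (-p)) ∂μ ≤
      ENNReal.ofReal (p / (p - s) * (2 ^ s * M) * (1 - ‖w‖) ^ (s - p)) :=
  lintegral_rpow_neg_le_of_measure_lt_le (by fun_prop) (fun _ => norm_nonneg _)
    (hs.trans_lt hsp) hsp (by linarith) (by positivity)
    (fun _ hδ => hμ.measure_restrict_norm_one_sub_conj_mul_lt_le hs hM hE hμE hw.le hδ)
    (measure_restrict_norm_one_sub_conj_mul_lt_one_sub_norm hE w)

lemma lintegral_norm_one_sub_conj_mul_rpow_neg_two_mul_le (hμ : IsCarlesonMeasure s M μ)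
    (hs : 0 < s) (hM : 0 ≤ M) {E : Set ℂ} (hE : E ⊆ UD) (hμE : μ E ≤ ENNReal.ofReal M) {w : ℂ}
    (hw : ‖w‖ < 1) :
    ∫⁻ z in E, ENNReal.ofReal (‖1 - (starRingEnd ℂ) w * z‖ ^ (-(2 * s))) ∂μ ≤
      ENNReal.ofReal (2 * 2 ^ s * M * (1 - ‖w‖) ^ (-s)) :=
  (hμ.lintegral_norm_one_sub_conj_mul_rpow_neg_le hs.le hM hE hμE (by linarith) hw).trans_eq
    (by congr 1; field_simp; ring_nf)

lemma mul_lintegral_lintegral_le (hμ : IsCarlesonMeasure s M μ) (hs : 0 < s) (hM : 0 ≤ M)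
    {E : Set ℂ} (hE : E ⊆ UD) (hμE : μ E ≤ ENNReal.ofReal M) (t : ℝ) {g : ℂ → ℝ}
    (hg : Measurable g) (hg0 : ∀ w, 0 ≤ g w) {a : ℂ} (ha : ‖a‖ < 1) :
    ENNReal.ofReal ((1 - ‖a‖ ^ 2) ^ t) *
        ∫⁻ z in E, (∫⁻ w in UD, ENNReal.ofReal (g w * (1 - ‖w‖ ^ 2) ^ (s + t) /
          (‖1 - (starRingEnd ℂ) a * w‖ ^ (2 * t) * ‖1 - (starRingEnd ℂ) w * z‖ ^ (2 * s)))) ∂μ ≤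
      ENNReal.ofReal (2 * 4 ^ s * M) *
        ∫⁻ w in UD, ENNReal.ofReal (g w * (1 - ‖moeb a w‖ ^ 2) ^ t) := by
  have hA : 0 ≤ 1 - ‖a‖ ^ 2 := by nlinarith [norm_nonneg a]
  have : IsFiniteMeasure (μ.restrict E) :=
    isFiniteMeasure_restrict.mpr (hμE.trans_lt ENNReal.ofReal_lt_top).ne
  set K : ℂ → ℝ := fun w => g w * (1 - ‖w‖ ^ 2) ^ (s + t) / ‖1 - (starRingEnd ℂ) a * w‖ ^ (2 * t)
  have hpointwise : ∀ w ∈ UD, (1 - ‖a‖ ^ 2) ^ t * (K w * (2 * 2 ^ s * M * (1 - ‖w‖) ^ (-s))) ≤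
      2 * 4 ^ s * M * (g w * (1 - ‖moeb a w‖ ^ 2) ^ t) := fun w hw => by
    have hg0w := hg0 w
    calc (1 - ‖a‖ ^ 2) ^ t * (K w * (2 * 2 ^ s * M * (1 - ‖w‖) ^ (-s)))
        = g w * (2 * 2 ^ s * M) * ((1 - ‖a‖ ^ 2) ^ t * (1 - ‖w‖ ^ 2) ^ (s + t) /
            ‖1 - (starRingEnd ℂ) a * w‖ ^ (2 * t) * (1 - ‖w‖) ^ (-s)) := by
          simp only [K]; ring
      _ ≤ g w * (2 * 2 ^ s * M) * (2 ^ s * (1 - ‖moeb a w‖ ^ 2) ^ t) :=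
          mul_le_mul_of_nonneg_left (one_sub_norm_sq_rpow_mul_le_two_rpow_mul_moeb hs.le ha
            (mem_ball_zero_iff.mp hw)) (by positivity)
      _ = 2 * 4 ^ s * M * (g w * (1 - ‖moeb a w‖ ^ 2) ^ t) := by
          rw [show (4 : ℝ) = 2 * 2 by norm_num, Real.mul_rpow (by norm_num) (by norm_num)]
          ring
  calc ENNReal.ofReal ((1 - ‖a‖ ^ 2) ^ t) *
        ∫⁻ z in E, (∫⁻ w in UD, ENNReal.ofReal (g w * (1 - ‖w‖ ^ 2) ^ (s + t) /
          (‖1 - (starRingEnd ℂ) a * w‖ ^ (2 * t) * ‖1 - (starRingEnd ℂ) w * z‖ ^ (2 * s)))) ∂μ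
      = ENNReal.ofReal ((1 - ‖a‖ ^ 2) ^ t) * ∫⁻ w in UD, ENNReal.ofReal (K w) *
          ∫⁻ z in E, ENNReal.ofReal (‖1 - (starRingEnd ℂ) w * z‖ ^ (-(2 * s))) ∂μ := by
        simp only [div_mul_eq_div_div]
        rw [lintegral_lintegral_div_norm_one_sub_conj_mul_rpow (by fun_prop : Measurable K)]
    _ ≤ ∫⁻ w in UD, ENNReal.ofReal ((1 - ‖a‖ ^ 2) ^ t) * (ENNReal.ofReal (K w) *
          ENNReal.ofReal (2 * 2 ^ s * M * (1 - ‖w‖) ^ (-s))) := by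
        rw [← lintegral_const_mul' _ _ ENNReal.ofReal_ne_top]
        refine setLIntegral_mono' measurableSet_UD fun w hw => ?_
        gcongr
        exact hμ.lintegral_norm_one_sub_conj_mul_rpow_neg_two_mul_le hs hM hE hμE
          (mem_ball_zero_iff.mp hw)
    _ ≤ ∫⁻ w in UD, ENNReal.ofReal (2 * 4 ^ s * M) *
          ENNReal.ofReal (g w * (1 - ‖moeb a w‖ ^ 2) ^ t) := by
        refine setLIntegral_mono' measurableSet_UD fun w hw => ?_
        have hK : 0 ≤ 1 - ‖w‖ := by linarith [mem_ball_zero_iff.mp hw]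
        rw [← ENNReal.ofReal_mul' (mul_nonneg (by positivity) (Real.rpow_nonneg hK _)),
          ← ENNReal.ofReal_mul (Real.rpow_nonneg hA _), ← ENNReal.ofReal_mul (by positivity)]
        exact ENNReal.ofReal_le_ofReal (hpointwise w hw)
    _ = ENNReal.ofReal (2 * 4 ^ s * M) *
          ∫⁻ w in UD, ENNReal.ofReal (g w * (1 - ‖moeb a w‖ ^ 2) ^ t) :=
        lintegral_const_mul' _ _ ENNReal.ofReal_ne_top

end IsCarlesonMeasure

lemma lintegral_le_qNorm_sq (t : ℝ) (f : ℂ → ℂ) {a : ℂ} (ha : a ∈ UD) :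
    ∫⁻ z in UD, ENNReal.ofReal (‖deriv f z‖ ^ 2 * (1 - ‖moeb a z‖ ^ 2) ^ t) ≤ qNorm t f ^ 2 := by
  set S := ⨆ b ∈ UD, ∫⁻ z in UD, ENNReal.ofReal (‖deriv f z‖ ^ 2 * (1 - ‖moeb b z‖ ^ 2) ^ t)
  calc ∫⁻ z in UD, ENNReal.ofReal (‖deriv f z‖ ^ 2 * (1 - ‖moeb a z‖ ^ 2) ^ t) ≤ S :=
        le_biSup (fun b => ∫⁻ z in UD, ENNReal.ofReal
          (‖deriv f z‖ ^ 2 * (1 - ‖moeb b z‖ ^ 2) ^ t)) ha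
    _ = (S ^ (1 / 2 : ℝ)) ^ 2 := by
        rw [← ENNReal.rpow_natCast, ← ENNReal.rpow_mul]; norm_num
    _ ≤ qNorm t f ^ 2 := by
        rw [qNorm]
        gcongr
        exact le_add_self

theorem stmt16_general (t s : ℝ) (ht : 0 < t) (hts : t < s) (μ : Measure ℂ)
    (M : ℝ) (hM : 0 ≤ M)
    (hμ : ∀ θ h : ℝ, 0 < h → h ≤ 1 → μ (tent θ h) ≤ ENNReal.ofReal (M * h ^ s)) :
    ∃ C : ℝ, 0 < C ∧ ∀ f : ℂ → ℂ, DifferentiableOn ℂ f UD →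
      ∀ θ h : ℝ, 0 < h → h ≤ 1 →
        ENNReal.ofReal ((1 - ‖((1 - h : ℝ) : ℂ) *
              Complex.exp (θ * Complex.I)‖ ^ 2) ^ (s - 2 * ((s - t) / 2))) *
          ∫⁻ z in tent θ h, (∫⁻ w in UD, ENNReal.ofReal
            (‖deriv f w‖ ^ 2 *
                (1 - ‖w‖ ^ 2) ^ (2 * s - 2 * ((s - t) / 2)) /
              (‖1 - (starRingEnd ℂ) (((1 - h : ℝ) : ℂ) *
                  Complex.exp (θ * Complex.I)) * w‖ ^ (2 * (s - 2 * ((s - t) / 2))) *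
                ‖1 - (starRingEnd ℂ) w * z‖ ^ (2 * s)))) ∂μ ≤
          ENNReal.ofReal (C * M) * (qNorm t f) ^ 2 := by
  have hs : 0 < s := ht.trans hts
  have hCarleson : IsCarlesonMeasure s M μ := hμ
  refine ⟨2 * 4 ^ s, by positivity, fun f _ θ h hh0 hh1 => ?_⟩
  rw [show s - 2 * ((s - t) / 2) = t by ring, show 2 * s - 2 * ((s - t) / 2) = s + t by ring]
  set a : ℂ := ((1 - h : ℝ) : ℂ) * Complex.exp (θ * Complex.I)
  have ha : ‖a‖ < 1 := by
    rw [norm_mul, Complex.norm_exp_ofReal_mul_I, Complex.norm_real,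
      Real.norm_of_nonneg (by linarith)]
    linarith
  calc _ ≤ ENNReal.ofReal (2 * 4 ^ s * M) *
        ∫⁻ w in UD, ENNReal.ofReal (‖deriv f w‖ ^ 2 * (1 - ‖moeb a w‖ ^ 2) ^ t) :=
        hCarleson.mul_lintegral_lintegral_le hs hM (tent_subset_UD θ h)
          (hCarleson.measure_tent_le hs.le hM θ hh0 hh1) t
          ((measurable_deriv f).norm.pow_const 2) (fun _ => by positivity) ha
    _ ≤ ENNReal.ofReal (2 * 4 ^ s * M) * qNorm t f ^ 2 := by
        gcongr
        exact lintegral_le_qNorm_sq t f (mem_ball_zero_iff.mpr ha)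

/-- main Fubini–Carleson estimate in the proof of the Q_t embedding. -/
theorem stmt16 (t s : ℝ) (ht : 0 < t) (hts : t < s) (hs1 : s ≤ 1) (μ : Measure ℂ)
    (M : ℝ) (hM : 0 ≤ M)
    (hμ : ∀ θ h : ℝ, 0 < h → h ≤ 1 → μ (tent θ h) ≤ ENNReal.ofReal (M * h ^ s)) :
    ∃ C : ℝ, 0 < C ∧ ∀ f : ℂ → ℂ, DifferentiableOn ℂ f UD →
      ∀ θ h : ℝ, 0 < h → h ≤ 1 →
        ENNReal.ofReal ((1 - ‖((1 - h : ℝ) : ℂ) *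
              Complex.exp (θ * Complex.I)‖ ^ 2) ^ (s - 2 * ((s - t) / 2))) *
          ∫⁻ z in tent θ h, (∫⁻ w in UD, ENNReal.ofReal
            (‖deriv f w‖ ^ 2 *
                (1 - ‖w‖ ^ 2) ^ (2 * s - 2 * ((s - t) / 2)) /
              (‖1 - (starRingEnd ℂ) (((1 - h : ℝ) : ℂ) *
                  Complex.exp (θ * Complex.I)) * w‖ ^ (2 * (s - 2 * ((s - t) / 2))) *
                ‖1 - (starRingEnd ℂ) w * z‖ ^ (2 * s)))) ∂μ ≤
          ENNReal.ofReal (C * M) * (qNorm t f) ^ 2 :=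
  stmt16_general t s ht hts μ M hM hμ
end
end
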